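/- Let C be an n×n complex matrix with ‖C‖ ≤ 1, set D = I − C*C, let d ≥ 1 and let B be a d×n matrix with B*B = D. For j ≥ 1 let T_j be the (jd+n)×(jd+n) block matrix whose (i, i+1) block is I_d for 1 ≤ i ≤ j−1, whose (j, j+1) block is B, whose (j+1, j+1) block is C, and whose other blocks are zero. Define bivariate polynomials φ_{−1} = 0, φ_0 = 1 and φ_{m+1}(z,r) = z·φ_m(z,r) − r²·φ_{m−1}(z,r). Then for every θ ∈ ℝ, every j ≥ 1 and all z, r ∈ ℂ, one has φ_j(z,r)^n · det( zI_{jd+n} − r e^{−iθ}T_j − r e^{iθ}T_j* ) = φ_j(z,r)^d · det( φ_j(z,r)·(zI_n − r e^{−iθ}C − r e^{iθ}C*) − r² φ_{j−1}(z,r)·D ). -/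

import Mathlib

set_option synthInstance.maxHeartbeats 1000000
set_option maxHeartbeats 1600000


open Matrix Complex

/-- The `j`-th level of the partial isometry tower of the contraction `C`,
built from a `d × n` matrix `B` with `Bᴴ * B = 1 - Cᴴ * C`.  It is the
`(j*d + n) × (j*d + n)` block matrix whose `(i, i+1)` block is `I_d` for
`1 ≤ i ≤ j-1`, whose `(j, j+1)` block is `B`, whose `(j+1, j+1)` block is `C`,
and whose other blocks vanish.  Block rows `1, …, j` (of size `d`) are indexed
by `Fin j × Fin d` and the last block row (of size `n`) by `Fin n`. -/
noncomputable def tower (n d : ℕ) (B : Matrix (Fin d) (Fin n) ℂ)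
    (C : Matrix (Fin n) (Fin n) ℂ) (j : ℕ) :
    Matrix ((Fin j × Fin d) ⊕ Fin n) ((Fin j × Fin d) ⊕ Fin n) ℂ :=
  fun p q =>
    match p, q with
    | Sum.inl (i, a), Sum.inl (i', a') =>
        if (i' : ℕ) = (i : ℕ) + 1 ∧ a' = a then 1 else 0
    | Sum.inl (i, a), Sum.inr b => if (i : ℕ) = j - 1 then B a b else 0
    | Sum.inr _, Sum.inl _ => 0
    | Sum.inr b, Sum.inr b' => C b b'

/-- The polynomials `φ_m(z, r)` defined by `φ_{-1} = 0`, `φ_0 = 1` and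
`φ_{m+1} = z φ_m - r² φ_{m-1}`, as functions of `(z, r)`. -/
noncomputable def phi : ℕ → ℂ → ℂ → ℂ
  | 0, _, _ => 1
  | 1, z, _ => z
  | (m + 2), z, r => z * phi (m + 1) z r - r ^ 2 * phi m z r

open Kronecker

section Generic
variable {F : Type*} [CommRing F]

/-- entry function of the tridiagonal matrix -/
def tent (x α β : F) (a b : ℕ) : F :=
  (if b = a then x else 0) - (if b = a + 1 then α else 0) - (if a = b + 1 then β else 0)

/-- the `k × k` tridiagonal matrix with `x` on the diagonal, `-α` above, `-β` below -/
def trib (x α β : F) (k : ℕ) : Matrix (Fin k) (Fin k) F :=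
  Matrix.of fun i i' => tent x α β (i : ℕ) (i' : ℕ)

/-- generic continuant polynomials -/
def psiF (x c : F) : ℕ → F
  | 0 => 1
  | 1 => x
  | (m + 2) => x * psiF x c (m + 1) - c * psiF x c m

lemma tent_succ (x α β : F) (a b : ℕ) : tent x α β (a+1) (b+1) = tent x α β a b := by
  simp [tent, Nat.add_right_cancel_iff]

lemma tent_eq_zero {x α β : F} {a b : ℕ} (h1 : b ≠ a) (h2 : b ≠ a+1) (h3 : a ≠ b+1) :
    tent x α β a b = 0 := by
  simp [tent, h1, h2, h3]

lemma det_trib (x α β : F) : ∀ k, (trib x α β k).det = psiF x (α * β) k := by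
  intro k
  induction k using Nat.strong_induction_on with
  | _ k ih =>
    match k with
    | 0 => simp [psiF]
    | 1 => simp [trib, tent, psiF, Matrix.det_fin_one]
    | (m+2) =>
      set M : Matrix (Fin (m+1)) (Fin (m+1)) F :=
        (trib x α β (m+2)).submatrix Fin.succ ((1 : Fin (m+2)).succAbove) with hMdef
      have hcol : ∀ i' : Fin m, ((1 : Fin (m+2)).succAbove (Fin.succ i') : ℕ) = (i' : ℕ) + 2 := by
        intro i'
        rw [Fin.succAbove_of_le_castSucc]
        · simp
        · rw [Fin.le_castSucc_iff]
          simp [Fin.lt_def]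
      have hcol0 : ((1 : Fin (m+2)).succAbove 0 : ℕ) = 0 := by
        rw [Fin.succAbove_of_castSucc_lt]
        · simp
        · simp [Fin.lt_def]
      have hM : M.det = -β * psiF x (α*β) m := by
        have hsub2 : M.submatrix ((0 : Fin (m+1)).succAbove) Fin.succ = trib x α β m := by
          ext i i'
          simp only [hMdef, Matrix.submatrix_apply, Fin.succAbove_zero, trib, Matrix.of_apply,
            hcol, Fin.val_succ]
          exact (tent_succ x α β ((i:ℕ)+1) ((i':ℕ)+1)).trans (tent_succ x α β i i')
        have hM00 : M 0 0 = -β := by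
          simp only [hMdef, Matrix.submatrix_apply, trib, Matrix.of_apply, hcol0, Fin.val_succ,
            Fin.val_zero]
          simp [tent]
        have hMi0 : ∀ i : Fin m, M i.succ 0 = 0 := by
          intro i
          simp only [hMdef, Matrix.submatrix_apply, trib, Matrix.of_apply, hcol0, Fin.val_succ]
          exact tent_eq_zero (by omega) (by omega) (by omega)
        rw [Matrix.det_succ_column_zero, Fin.sum_univ_succ,
          Finset.sum_eq_zero (fun i _ => by rw [hMi0]; ring), hsub2, hM00,
          ih m (by omega)]
        simp
      have hsub1 : (trib x α β (m+2)).submatrix Fin.succ ((0 : Fin (m+2)).succAbove)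
          = trib x α β (m+1) := by
        ext i i'
        simp only [Matrix.submatrix_apply, Fin.succAbove_zero, trib, Matrix.of_apply, Fin.val_succ]
        exact tent_succ x α β i i'
      have h00 : (trib x α β (m+2)) 0 0 = x := by simp [trib, tent]
      have h01 : (trib x α β (m+2)) 0 1 = -α := by
        have h1 : ((1 : Fin (m+2)) : ℕ) = 1 := rfl
        simp [trib, tent, h1]
      have htail2 : ∀ i : Fin m, (trib x α β (m+2)) 0 i.succ.succ = 0 := by
        intro i
        simp only [trib, Matrix.of_apply, Fin.val_succ, Fin.val_zero]
        exact tent_eq_zero (by omega) (by omega) (by omega)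
      rw [Matrix.det_succ_row_zero, Fin.sum_univ_succ, Fin.sum_univ_succ,
        Finset.sum_eq_zero (fun i _ => by rw [htail2]; ring), hsub1, h00]
      rw [Fin.succ_zero_eq_one, h01, ← hMdef, hM, ih (m+1) (by omega)]
      show (-1:F)^((0: Fin (m+2)):ℕ) * x * psiF x (α*β) (m+1) +
        ((-1:F)^(((1:Fin (m+2))):ℕ) * (-α) * (-β * psiF x (α*β) m) + 0) = psiF x (α*β) (m+2)
      have h1 : (((1:Fin (m+2))):ℕ) = 1 := rfl
      have h0 : (((0:Fin (m+2))):ℕ) = 0 := rfl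
      rw [h1, h0]
      show _ = x * psiF x (α*β) (m+1) - (α*β) * psiF x (α*β) m
      ring

lemma adj_trib (x α β : F) (m : ℕ) :
    (trib x α β (m+1)).adjugate (Fin.last m) (Fin.last m) = psiF x (α*β) m := by
  rw [Matrix.adjugate_apply]
  set A := (trib x α β (m+1)).updateRow (Fin.last m) (Pi.single (Fin.last m) 1) with hA
  have hrow : ∀ c, A (Fin.last m) c = if c = Fin.last m then 1 else 0 := by
    intro c; rw [hA, Matrix.updateRow_self, Pi.single_apply]
  have hsub : A.submatrix (Fin.last m).succAbove (Fin.last m).succAbove = trib x α β m := by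
    ext i i'
    rw [Fin.succAbove_last, Matrix.submatrix_apply, hA, Matrix.updateRow_apply,
      if_neg (Fin.castSucc_lt_last i).ne]
    simp [trib]
  rw [Matrix.det_succ_row A (Fin.last m), Finset.sum_eq_single (Fin.last m)]
  · rw [hrow, if_pos rfl, hsub, det_trib]
    have : ((Fin.last m : ℕ) + (Fin.last m : ℕ)) = m + m := by simp
    rw [this, Even.neg_one_pow ⟨m, rfl⟩]
    ring
  · intro b _ hb
    rw [hrow, if_neg hb]; ring
  · intro h; exact absurd (Finset.mem_univ _) h

/-- generic analogue of `tower` -/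
def towerF (n d j : ℕ) (B : Matrix (Fin d) (Fin n) F) (C : Matrix (Fin n) (Fin n) F) :
    Matrix ((Fin j × Fin d) ⊕ Fin n) ((Fin j × Fin d) ⊕ Fin n) F :=
  fun p q =>
    match p, q with
    | Sum.inl (i, a), Sum.inl (i', a') =>
        if (i' : ℕ) = (i : ℕ) + 1 ∧ a' = a then 1 else 0
    | Sum.inl (i, a), Sum.inr b => if (i : ℕ) = j - 1 then B a b else 0
    | Sum.inr _, Sum.inl _ => 0
    | Sum.inr b, Sum.inr b' => C b b'

/-- generic analogue of `towerᴴ` -/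
def towerF2 (n d j : ℕ) (B₂ : Matrix (Fin n) (Fin d) F) (C₂ : Matrix (Fin n) (Fin n) F) :
    Matrix ((Fin j × Fin d) ⊕ Fin n) ((Fin j × Fin d) ⊕ Fin n) F :=
  fun p q =>
    match p, q with
    | Sum.inl (i, a), Sum.inl (i', a') =>
        if (i : ℕ) = (i' : ℕ) + 1 ∧ a = a' then 1 else 0
    | Sum.inl _, Sum.inr _ => 0
    | Sum.inr b, Sum.inl (i, a) => if (i : ℕ) = j - 1 then B₂ b a else 0
    | Sum.inr b, Sum.inr b' => C₂ b b'

lemma block_decomp (n d j : ℕ) (x α β : F) (B : Matrix (Fin d) (Fin n) F)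
    (B₂ : Matrix (Fin n) (Fin d) F) (C C₂ : Matrix (Fin n) (Fin n) F) :
    x • (1 : Matrix ((Fin j × Fin d) ⊕ Fin n) ((Fin j × Fin d) ⊕ Fin n) F)
      - α • towerF n d j B C - β • towerF2 n d j B₂ C₂
    = Matrix.fromBlocks (trib x α β j ⊗ₖ (1 : Matrix (Fin d) (Fin d) F))
        (Matrix.of fun p b => if (p.1 : ℕ) = j - 1 then -α * B p.2 b else 0)
        (Matrix.of fun b p => if (p.1 : ℕ) = j - 1 then -β * B₂ b p.2 else 0)
        (x • 1 - α • C - β • C₂) := by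
  ext p q
  rcases p with ⟨i, a⟩ | b <;> rcases q with ⟨i', a'⟩ | b'
  · simp only [Matrix.sub_apply, Matrix.smul_apply, Matrix.one_apply, smul_eq_mul,
      towerF, towerF2, Matrix.fromBlocks_apply₁₁, Matrix.kroneckerMap_apply, trib,
      Matrix.of_apply, tent, Sum.inl.injEq, Prod.mk.injEq]
    by_cases hA : a = a'
    · subst hA
      simp only [and_true, eq_self_iff_true, if_true, Matrix.one_apply_eq, mul_one]
      have : (i = i') ↔ ((i' : ℕ) = (i : ℕ)) := by rw [Fin.ext_iff]; omega
      rw [if_congr this rfl rfl]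
      split_ifs <;> ring
    · have h1 : ¬(i = i' ∧ a = a') := fun h => hA h.2
      have h2 : ¬((i' : ℕ) = (i : ℕ) + 1 ∧ a' = a) := fun h => hA h.2.symm
      have h3 : ¬((i : ℕ) = (i' : ℕ) + 1 ∧ a = a') := fun h => hA h.2
      rw [if_neg h1, if_neg h2, if_neg h3, if_neg (fun h : a = a' => hA h)]
      ring
  · simp only [Matrix.sub_apply, Matrix.smul_apply, Matrix.one_apply, smul_eq_mul,
      towerF, towerF2, Matrix.fromBlocks_apply₁₂, Matrix.of_apply]
    rw [if_neg (by simp)]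
    split_ifs <;> ring
  · simp only [Matrix.sub_apply, Matrix.smul_apply, Matrix.one_apply, smul_eq_mul,
      towerF, towerF2, Matrix.fromBlocks_apply₂₁, Matrix.of_apply]
    rw [if_neg (by simp)]
    split_ifs <;> ring
  · simp only [Matrix.sub_apply, Matrix.smul_apply, smul_eq_mul,
      towerF, towerF2, Matrix.fromBlocks_apply₂₂]
    congr 1 <;> simp [Matrix.one_apply, Sum.inr.injEq]

end Generic

section KeyLemma
variable {F : Type*} [Field F]

lemma key_lemma (n d j : ℕ) (hj : 1 ≤ j) (x α β : F)
    (B : Matrix (Fin d) (Fin n) F) (B₂ : Matrix (Fin n) (Fin d) F)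
    (C C₂ : Matrix (Fin n) (Fin n) F)
    (hne : psiF x (α*β) j ≠ 0) :
    psiF x (α*β) j ^ n * (x • (1 : Matrix ((Fin j × Fin d) ⊕ Fin n) ((Fin j × Fin d) ⊕ Fin n) F)
        - α • towerF n d j B C - β • towerF2 n d j B₂ C₂).det
    = psiF x (α*β) j ^ d *
      (psiF x (α*β) j • (x • (1 : Matrix (Fin n) (Fin n) F) - α • C - β • C₂)
        - (α * β * psiF x (α*β) (j-1)) • (B₂ * B)).det := by
  obtain ⟨m, rfl⟩ : ∃ m, j = m + 1 := ⟨j - 1, (Nat.succ_pred_eq_of_pos hj).symm⟩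
  set ψ : ℕ → F := psiF x (α*β) with hψ
  set Tri := trib x α β (m+1) with hTri
  have hdetTri : Tri.det = ψ (m+1) := det_trib x α β (m+1)
  have hUnit : IsUnit (Tri ⊗ₖ (1 : Matrix (Fin d) (Fin d) F)).det := by
    rw [Matrix.det_kronecker, hdetTri, Matrix.det_one, one_pow, mul_one]
    exact (isUnit_iff_ne_zero).2 (pow_ne_zero _ hne)
  haveI : Invertible (Tri ⊗ₖ (1 : Matrix (Fin d) (Fin d) F)) :=
    Matrix.invertibleOfIsUnitDet _ hUnit
  have hcorner : Tri⁻¹ (Fin.last m) (Fin.last m) = (ψ (m+1))⁻¹ * ψ m := by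
    rw [Matrix.inv_def, Matrix.smul_apply, adj_trib, hdetTri, Ring.inverse_eq_inv',
      smul_eq_mul]
  have hc : ∀ i : Fin (m+1), ((i : ℕ) = m + 1 - 1) ↔ (i = Fin.last m) := by
    intro i; rw [Fin.ext_iff]; simp
  have hprod :
      (Matrix.of fun b (p : Fin (m+1) × Fin d) =>
          if (p.1 : ℕ) = m + 1 - 1 then -β * B₂ b p.2 else 0) *
        (Tri ⊗ₖ (1 : Matrix (Fin d) (Fin d) F))⁻¹ *
        (Matrix.of fun (p : Fin (m+1) × Fin d) b =>
          if (p.1 : ℕ) = m + 1 - 1 then -α * B p.2 b else 0)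
      = (α * β * ψ m * (ψ (m+1))⁻¹) • (B₂ * B) := by
    rw [Matrix.inv_kronecker, inv_one]
    ext b b'
    simp only [Matrix.mul_apply, Fintype.sum_prod_type, Matrix.kroneckerMap_apply,
      Matrix.of_apply, hc, ite_mul, zero_mul, mul_ite, mul_zero, Finset.sum_ite_eq,
      Finset.sum_ite_eq', Finset.mem_univ, if_true, Matrix.one_apply, Matrix.smul_apply,
      smul_eq_mul, hcorner]
    rw [Finset.sum_comm]
    simp only [Finset.sum_ite_eq', Finset.mem_univ, if_true, hcorner, mul_one]
    rw [Finset.mul_sum]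
    exact Finset.sum_congr rfl fun a _ => by ring
  rw [block_decomp, Matrix.det_fromBlocks₁₁, invOf_eq_nonsing_inv, hprod,
    Matrix.det_kronecker, hdetTri, Matrix.det_one, one_pow, mul_one, Fintype.card_fin]
  have key2 : ψ (m+1) • ((x • (1 : Matrix (Fin n) (Fin n) F) - α • C - β • C₂)
      - (α * β * ψ m * (ψ (m+1))⁻¹) • (B₂ * B))
      = ψ (m+1) • (x • (1 : Matrix (Fin n) (Fin n) F) - α • C - β • C₂)
        - (α * β * ψ m) • (B₂ * B) := by
    rw [smul_sub, smul_smul]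
    congr 2
    rw [mul_comm (α * β * ψ m) ((ψ (m+1))⁻¹), ← mul_assoc, mul_inv_cancel₀ hne, one_mul]
  have hm1 : m + 1 - 1 = m := rfl
  rw [hm1, ← key2, Matrix.det_smul, Fintype.card_fin]
  ring

end KeyLemma

section Maps
variable {F G : Type*} [CommRing F] [CommRing G]

lemma psiF_map (g : F →+* G) (x c : F) : ∀ m, g (psiF x c m) = psiF (g x) (g c) m := by
  intro m
  induction m using Nat.strong_induction_on with
  | _ m ih =>
    match m with
    | 0 => simp [psiF]
    | 1 => simp [psiF]
    | (m+2) =>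
      simp only [psiF, map_sub, _root_.map_mul, ih (m+1) (by omega), ih m (by omega)]

lemma psiF_phi (z r : ℂ) : ∀ m, psiF z (r^2) m = phi m z r := by
  intro m
  induction m using Nat.strong_induction_on with
  | _ m ih =>
    match m with
    | 0 => simp [psiF, phi]
    | 1 => simp [psiF, phi]
    | (m+2) => simp only [psiF, phi, ih (m+1) (by omega), ih m (by omega)]

lemma psiR_monic (c : ℂ) :
    ∀ m, (psiF (Polynomial.X) (Polynomial.C c) m).Monic ∧
      (psiF (Polynomial.X) (Polynomial.C c) m).degree = (m : WithBot ℕ) := by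
  intro m
  induction m using Nat.strong_induction_on with
  | _ m ih =>
    match m with
    | 0 => refine ⟨Polynomial.monic_one, ?_⟩; simp [psiF]
    | 1 => refine ⟨Polynomial.monic_X, ?_⟩; simp [psiF]
    | (m+2) =>
      obtain ⟨h1M, h1d⟩ := ih (m+1) (by omega)
      obtain ⟨h0M, h0d⟩ := ih m (by omega)
      have hqM : (Polynomial.X * psiF Polynomial.X (Polynomial.C c) (m+1)).Monic :=
        Polynomial.monic_X.mul h1M
      have hqd : (Polynomial.X * psiF Polynomial.X (Polynomial.C c) (m+1)).degree
          = ((m+2 : ℕ) : WithBot ℕ) := by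
        rw [Polynomial.degree_mul, Polynomial.degree_X, h1d]
        norm_cast
        omega
      have hsd : (Polynomial.C c * psiF Polynomial.X (Polynomial.C c) m).degree
          ≤ (m : WithBot ℕ) := by
        refine le_trans (Polynomial.degree_mul_le _ _) ?_
        rw [h0d]
        exact le_trans (add_le_add Polynomial.degree_C_le le_rfl) (by rw [zero_add])
      have hlt : (Polynomial.C c * psiF Polynomial.X (Polynomial.C c) m).degree
          < (Polynomial.X * psiF Polynomial.X (Polynomial.C c) (m+1)).degree := by
        rw [hqd]
        exact lt_of_le_of_lt hsd (by exact_mod_cast Nat.lt_succ_of_lt (Nat.lt_succ_self m))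
      constructor
      · show (Polynomial.X * psiF Polynomial.X (Polynomial.C c) (m+1)
            - Polynomial.C c * psiF Polynomial.X (Polynomial.C c) m).Monic
        rw [sub_eq_add_neg]
        exact hqM.add_of_left (by rwa [Polynomial.degree_neg])
      · show (Polynomial.X * psiF Polynomial.X (Polynomial.C c) (m+1)
            - Polynomial.C c * psiF Polynomial.X (Polynomial.C c) m).degree = _
        rw [Polynomial.degree_sub_eq_left_of_degree_lt hlt, hqd]

lemma towerF_map (f : F →+* G) (n d j : ℕ) (B : Matrix (Fin d) (Fin n) F)
    (C : Matrix (Fin n) (Fin n) F) :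
    (towerF n d j B C).map f = towerF n d j (B.map f) (C.map f) := by
  ext p q
  rcases p with ⟨i, a⟩ | b <;> rcases q with ⟨i', a'⟩ | b' <;>
    simp [towerF, Matrix.map_apply, apply_ite f]

lemma towerF2_map (f : F →+* G) (n d j : ℕ) (B₂ : Matrix (Fin n) (Fin d) F)
    (C₂ : Matrix (Fin n) (Fin n) F) :
    (towerF2 n d j B₂ C₂).map f = towerF2 n d j (B₂.map f) (C₂.map f) := by
  ext p q
  rcases p with ⟨i, a⟩ | b <;> rcases q with ⟨i', a'⟩ | b' <;>
    simp [towerF2, Matrix.map_apply, apply_ite f]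

lemma combo_map {I : Type*} [Fintype I] [DecidableEq I] (f : F →+* G) (x α β : F)
    (T T₂ : Matrix I I F) :
    (x • (1 : Matrix I I F) - α • T - β • T₂).map f
      = f x • (1 : Matrix I I G) - f α • T.map f - f β • T₂.map f := by
  ext p q
  simp only [Matrix.map_apply, Matrix.sub_apply, Matrix.smul_apply, smul_eq_mul, map_sub,
    _root_.map_mul, Matrix.one_apply, apply_ite f, _root_.map_one, _root_.map_zero]

lemma smulmat_map {I J : Type*} (f : F →+* G) (p : F) (M : Matrix I J F) :
    (p • M).map f = f p • M.map f := by
  ext i q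
  simp [Matrix.map_apply, _root_.map_mul]

lemma submat_map (f : F →+* G) (n : ℕ) (M N : Matrix (Fin n) (Fin n) F) :
    (M - N).map f = M.map f - N.map f := by
  ext i q
  simp [Matrix.map_apply]

end Maps

lemma tower_eq_towerF (n d : ℕ) (B : Matrix (Fin d) (Fin n) ℂ)
    (C : Matrix (Fin n) (Fin n) ℂ) (j : ℕ) : tower n d B C j = towerF n d j B C := rfl

lemma tower_conjTranspose (n d : ℕ) (B : Matrix (Fin d) (Fin n) ℂ)
    (C : Matrix (Fin n) (Fin n) ℂ) (j : ℕ) :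
    (tower n d B C j)ᴴ = towerF2 n d j Bᴴ Cᴴ := by
  ext p q
  rcases p with ⟨i, a⟩ | b <;> rcases q with ⟨i', a'⟩ | b' <;>
    simp [tower, towerF2, Matrix.conjTranspose_apply, apply_ite (starRingEnd ℂ)]

theorem stmt2 (n d : ℕ) (hd : 1 ≤ d) (C : Matrix (Fin n) (Fin n) ℂ)
    (hC : ‖Matrix.toEuclideanCLM (𝕜 := ℂ) C‖ ≤ 1)
    (B : Matrix (Fin d) (Fin n) ℂ) (hB : Bᴴ * B = 1 - Cᴴ * C)
    (j : ℕ) (hj : 1 ≤ j) (θ : ℝ) (z r : ℂ) :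
    phi j z r ^ n *
        Matrix.det (z • (1 : Matrix ((Fin j × Fin d) ⊕ Fin n) ((Fin j × Fin d) ⊕ Fin n) ℂ)
          - (r * Complex.exp (-(θ : ℂ) * Complex.I)) • tower n d B C j
          - (r * Complex.exp ((θ : ℂ) * Complex.I)) • (tower n d B C j)ᴴ) =
      phi j z r ^ d *
        Matrix.det (phi j z r • (z • (1 : Matrix (Fin n) (Fin n) ℂ)
            - (r * Complex.exp (-(θ : ℂ) * Complex.I)) • C
            - (r * Complex.exp ((θ : ℂ) * Complex.I)) • Cᴴ)
          - (r ^ 2 * phi (j - 1) z r) • (1 - Cᴴ * C)) := by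
  classical
  set α₀ : ℂ := r * Complex.exp (-(θ:ℂ) * Complex.I) with hα₀
  set β₀ : ℂ := r * Complex.exp ((θ:ℂ) * Complex.I) with hβ₀
  have hαβ : α₀ * β₀ = r ^ 2 := by
    have h1 : Complex.exp (-(θ:ℂ) * Complex.I) * Complex.exp ((θ:ℂ) * Complex.I) = 1 := by
      rw [← Complex.exp_add, neg_mul, neg_add_cancel, Complex.exp_zero]
    rw [hα₀, hβ₀, mul_mul_mul_comm, h1, mul_one, sq]
  set g : Polynomial ℂ →+* RatFunc ℂ := (algebraMap (Polynomial ℂ) (RatFunc ℂ)) with hg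
  set f₀ : ℂ →+* Polynomial ℂ := Polynomial.C with hf₀
  set fK : ℂ →+* RatFunc ℂ := g.comp f₀ with hfK
  set ev : Polynomial ℂ →+* ℂ := Polynomial.evalRingHom z with hev
  have hmapmap : ∀ {p q : Type} [Fintype p] [Fintype q] (M : Matrix p q ℂ),
      (M.map f₀).map g = M.map fK := by
    intro p q _ _ M
    rw [Matrix.map_map, hfK, RingHom.coe_comp]
  have hmapev : ∀ {p q : Type} [Fintype p] [Fintype q] (M : Matrix p q ℂ),
      (M.map f₀).map ev = M := by
    intro p q _ _ M
    rw [Matrix.map_map]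
    have h : (⇑ev ∘ ⇑f₀) = id := funext fun a => by simp [hev, hf₀]
    rw [h, Matrix.map_id]
  set ψR : ℕ → Polynomial ℂ := psiF Polynomial.X (Polynomial.C (r^2)) with hψR
  set M_R := (Polynomial.X : Polynomial ℂ) • (1 : Matrix ((Fin j × Fin d) ⊕ Fin n)
        ((Fin j × Fin d) ⊕ Fin n) (Polynomial ℂ))
      - f₀ α₀ • towerF n d j (B.map f₀) (C.map f₀)
      - f₀ β₀ • towerF2 n d j (Bᴴ.map f₀) (Cᴴ.map f₀) with hM_R
  set S_R := (Polynomial.X : Polynomial ℂ) • (1 : Matrix (Fin n) (Fin n) (Polynomial ℂ))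
      - f₀ α₀ • (C.map f₀) - f₀ β₀ • (Cᴴ.map f₀) with hS_R
  set N_R := ψR j • S_R - (f₀ (r^2) * ψR (j-1)) • ((1 - Cᴴ * C).map f₀) with hN_R
  -- the key identity in `ℂ[X]`
  have hpsiK : ∀ m, g (ψR m) = psiF (g Polynomial.X) (fK α₀ * fK β₀) m := by
    intro m
    rw [hψR, psiF_map g]
    congr 1
    rw [hfK, RingHom.comp_apply, RingHom.comp_apply, ← _root_.map_mul, ← _root_.map_mul, hαβ]
  have hne : psiF (g Polynomial.X) (fK α₀ * fK β₀) j ≠ 0 := by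
    rw [← hpsiK j]
    intro h
    exact (psiR_monic (r^2) j).1.ne_zero
      (RatFunc.algebraMap_injective ℂ (by rw [← hg, h, map_zero]))
  have hEqR : ψR j ^ n * M_R.det = ψR j ^ d * N_R.det := by
    apply RatFunc.algebraMap_injective ℂ
    rw [← hg, _root_.map_mul, _root_.map_mul, map_pow, map_pow, RingHom.map_det,
      RingHom.map_det, RingHom.mapMatrix_apply, RingHom.mapMatrix_apply]
    have hM : M_R.map g = (g Polynomial.X) • 1
        - fK α₀ • towerF n d j (B.map fK) (C.map fK)
        - fK β₀ • towerF2 n d j (Bᴴ.map fK) (Cᴴ.map fK) := by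
      rw [hM_R, combo_map, towerF_map, towerF2_map, hmapmap, hmapmap, hmapmap, hmapmap]
      rw [hfK, RingHom.comp_apply, RingHom.comp_apply]
    have hN : N_R.map g = psiF (g Polynomial.X) (fK α₀ * fK β₀) j •
          ((g Polynomial.X) • (1 : Matrix (Fin n) (Fin n) (RatFunc ℂ))
            - fK α₀ • (C.map fK) - fK β₀ • (Cᴴ.map fK))
        - (fK α₀ * fK β₀ * psiF (g Polynomial.X) (fK α₀ * fK β₀) (j-1)) •
            ((Bᴴ.map fK) * (B.map fK)) := by
      rw [hN_R, submat_map, smulmat_map, smulmat_map, hpsiK j]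
      congr 1
      · congr 1
        rw [hS_R, combo_map, hmapmap, hmapmap]
        rw [hfK, RingHom.comp_apply, RingHom.comp_apply]
      · congr 1
        · rw [_root_.map_mul, hpsiK (j-1)]
          congr 1
          rw [show fK α₀ = g (f₀ α₀) from rfl, show fK β₀ = g (f₀ β₀) from rfl,
            ← _root_.map_mul, ← _root_.map_mul, hαβ]
        · rw [hmapmap, ← Matrix.map_mul, hB]
    rw [hM, hN, hpsiK j]
    exact key_lemma n d j hj (g Polynomial.X) (fK α₀) (fK β₀)
      (B.map fK) (Bᴴ.map fK) (C.map fK) (Cᴴ.map fK) hne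
  -- evaluate at `z`
  have hfin := congrArg ev hEqR
  rw [_root_.map_mul, _root_.map_mul, map_pow, map_pow, RingHom.map_det,
    RingHom.map_det, RingHom.mapMatrix_apply, RingHom.mapMatrix_apply] at hfin
  have hpsiev : ∀ m, ev (ψR m) = phi m z r := by
    intro m
    rw [hψR, psiF_map ev]
    have h1 : ev Polynomial.X = z := by simp [hev]
    have h2 : ev (Polynomial.C (r^2)) = r^2 := by simp [hev]
    rw [h1, h2, psiF_phi]
  have hMev : M_R.map ev = z • (1 : Matrix ((Fin j × Fin d) ⊕ Fin n)
        ((Fin j × Fin d) ⊕ Fin n) ℂ)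
      - α₀ • tower n d B C j - β₀ • (tower n d B C j)ᴴ := by
    rw [hM_R, combo_map, towerF_map, towerF2_map, hmapev, hmapev, hmapev, hmapev]
    have h1 : ev Polynomial.X = z := by simp [hev]
    have h2 : ∀ a : ℂ, ev (f₀ a) = a := fun a => by simp [hev, hf₀]
    rw [h1, h2, h2, tower_conjTranspose, tower_eq_towerF]
  have hNev : N_R.map ev = phi j z r • (z • (1 : Matrix (Fin n) (Fin n) ℂ)
        - α₀ • C - β₀ • Cᴴ) - (r ^ 2 * phi (j-1) z r) • (1 - Cᴴ * C) := by
    rw [hN_R, submat_map, smulmat_map, smulmat_map, hpsiev j]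
    have h1 : ev Polynomial.X = z := by simp [hev]
    have h2 : ∀ a : ℂ, ev (f₀ a) = a := fun a => by simp [hev, hf₀]
    rw [hS_R, combo_map, hmapev, hmapev, h1, h2, h2, _root_.map_mul, hpsiev (j-1),
      h2, hmapev]
  rw [hpsiev j, hMev, hNev] at hfin
  exact hfin
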